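/- For all integers m ≥ 1 and n ≥ 0, the ratio φ²_{n,m−1} / φ²_{n,m} equals m²(2n+2m+1)(2n+2m+2) / (2m(2m+1)(3n+2m−1)(3n+2m)), and this quantity is at least 2/27. -/
import Mathlib


/-- The number of rooted type II triangulations of a disc with m+2 boundary
vertices and n internal vertices. -/
noncomputable def phi2 (n m : ℕ) : ℝ :=
  (2 ^ (n + 1) * Nat.factorial (2 * m + 1) * Nat.factorial (2 * m + 3 * n) : ℝ) /
    ((Nat.factorial m) ^ 2 * Nat.factorial n * Nat.factorial (2 * m + 2 * n + 2))

private lemma fac2 (a : ℕ) : ((a + 2).factorial : ℝ) =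
    ((a : ℝ) + 2) * ((a : ℝ) + 1) * (a.factorial : ℝ) := by
  rw [Nat.factorial_succ, Nat.factorial_succ]
  push_cast
  ring

private lemma fac_pos' (a : ℕ) : (0 : ℝ) < (a.factorial : ℝ) := by
  exact_mod_cast a.factorial_pos

private lemma phi2_pos (n m : ℕ) : 0 < phi2 n m := by
  unfold phi2
  apply div_pos
  · exact mul_pos (mul_pos (by positivity) (fac_pos' _)) (fac_pos' _)
  · exact mul_pos (mul_pos (pow_pos (fac_pos' _) 2) (fac_pos' _)) (fac_pos' _)

private lemma phi2_step (n k : ℕ) :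
    phi2 n (k + 1) =
      ((2 * (k : ℝ) + 3) * (2 * k + 2) * (2 * k + 3 * n + 2) * (2 * k + 3 * n + 1)) /
        (((k : ℝ) + 1) ^ 2 * (2 * k + 2 * n + 4) * (2 * k + 2 * n + 3)) * phi2 n k := by
  unfold phi2
  have h1 : 2 * (k + 1) + 1 = (2 * k + 1) + 2 := by ring
  have h2 : 2 * (k + 1) + 3 * n = (2 * k + 3 * n) + 2 := by ring
  have h3 : 2 * (k + 1) + 2 * n + 2 = (2 * k + 2 * n + 2) + 2 := by ring
  have h4 : (((k + 1).factorial : ℝ)) = ((k : ℝ) + 1) * (k.factorial : ℝ) := by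
    rw [Nat.factorial_succ]; push_cast; ring
  rw [h1, h2, h3, fac2, fac2, fac2, h4, div_mul_div_comm]
  congr 1 <;> push_cast <;> ring

set_option maxHeartbeats 800000 in
/-- for m ≥ 1 and n ≥ 0,
φ²_{n,m−1}/φ²_{n,m} = m²(2n+2m+1)(2n+2m+2)/(2m(2m+1)(3n+2m−1)(3n+2m)) ≥ 2/27. -/
theorem phi2_ratio (m n : ℕ) (hm : 1 ≤ m) :
    phi2 n (m - 1) / phi2 n m =
      ((m : ℝ) ^ 2 * (2 * n + 2 * m + 1) * (2 * n + 2 * m + 2)) /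
        (2 * m * (2 * m + 1) * (3 * n + 2 * m - 1) * (3 * n + 2 * m)) ∧
    (2 / 27 : ℝ) ≤
      ((m : ℝ) ^ 2 * (2 * n + 2 * m + 1) * (2 * n + 2 * m + 2)) /
        (2 * m * (2 * m + 1) * (3 * n + 2 * m - 1) * (3 * n + 2 * m)) := by
  obtain ⟨k, rfl⟩ : ∃ k, m = k + 1 := ⟨m - 1, (Nat.succ_pred_eq_of_pos hm).symm⟩
  have hk : k + 1 - 1 = k := rfl
  have hn : (0 : ℝ) ≤ (n : ℝ) := Nat.cast_nonneg n
  have hK : (0 : ℝ) ≤ (k : ℝ) := Nat.cast_nonneg k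
  have hdeq : (2 * ((k : ℝ) + 1) * (2 * ((k : ℝ) + 1) + 1) *
      (3 * (n : ℝ) + 2 * ((k : ℝ) + 1) - 1) * (3 * (n : ℝ) + 2 * ((k : ℝ) + 1))) =
      2 * ((k : ℝ) + 1) * (2 * (k : ℝ) + 3) * (3 * (n : ℝ) + 2 * (k : ℝ) + 1) *
        (3 * (n : ℝ) + 2 * (k : ℝ) + 2) := by ring
  constructor
  · rw [hk, phi2_step]
    have hx : phi2 n k ≠ 0 := (phi2_pos n k).ne'
    push_cast
    rw [hdeq]
    have c1 : (2 * (k : ℝ) + 3) * (2 * k + 2) * (2 * k + 3 * n + 2) * (2 * k + 3 * n + 1) ≠ 0 := by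
      positivity
    have c2 : ((k : ℝ) + 1) ^ 2 * (2 * k + 2 * n + 4) * (2 * k + 2 * n + 3) ≠ 0 := by positivity
    have c3 : 2 * ((k : ℝ) + 1) * (2 * (k : ℝ) + 3) * (3 * (n : ℝ) + 2 * (k : ℝ) + 1) *
        (3 * (n : ℝ) + 2 * (k : ℝ) + 2) ≠ 0 := by positivity
    field_simp
    ring
  · have hden : (0 : ℝ) <
        2 * ((k : ℕ) + 1 : ℕ) * (2 * ((k : ℕ) + 1 : ℕ) + 1) *
          (3 * n + 2 * ((k : ℕ) + 1 : ℕ) - 1) * (3 * n + 2 * ((k : ℕ) + 1 : ℕ)) := by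
      push_cast
      rw [hdeq]
      positivity
    rw [div_le_div_iff₀ (by norm_num) hden]
    push_cast
    rw [hdeq]
    nlinarith [hn, hK, mul_nonneg hn hK, mul_nonneg hn hn, mul_nonneg hK hK,
      mul_nonneg (mul_nonneg hn hK) hK, mul_nonneg (mul_nonneg hn hn) hK,
      mul_nonneg (mul_nonneg (mul_nonneg hn hn) hK) hK]
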